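/- arXiv:2112.10846 — 2 statements merged into one kernel-verified Lean document; each statement's English description precedes it below -/
import Mathlib

section
/- In any pretree, if m ∈ [p,q] ∩ [q,r] ∩ [p,r], then [p,r] ∩ [p,q] = [p,m] and [p,r] ∩ [q,r] = [m,r]. -/
/-- A pretree: a set with an interval function satisfying symmetry, thinness and linearity. -/
structure Pretree (T : Type*) where
  seg : T → T → Set T
  seg_comm : ∀ p q, seg p q = seg q p
  left_mem : ∀ p q, p ∈ seg p q
  right_mem : ∀ p q, q ∈ seg p q
  thin : ∀ p q r, seg p r ⊆ seg p q ∪ seg q r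
  linear : ∀ p q r, r ∈ seg p q → q ∈ seg p r → q = r

lemma pretree_between {T : Type*} (P : Pretree T) {p q m x : T}
    (hm : m ∈ P.seg p q) (hx : x ∈ P.seg p m) :
    x ∈ P.seg p q ∧ m ∈ P.seg x q := by
  rcases P.thin p x q hm with h | h
  · have hxm : x = m := P.linear p x m h hx
    subst hxm
    exact ⟨hm, P.left_mem x q⟩
  · refine ⟨?_, h⟩
    rcases P.thin p q m hx with h2 | h2
    · exact h2
    · have hxm : x = m := by
        refine P.linear q x m ?_ ?_
        · rwa [P.seg_comm] at h
        · exact h2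
      subst hxm
      exact hm

lemma pretree_half {T : Type*} (P : Pretree T) (p q r m : T)
    (h1 : m ∈ P.seg p q) (h2 : m ∈ P.seg q r) (h3 : m ∈ P.seg p r) :
    P.seg p r ∩ P.seg p q = P.seg p m := by
  ext x
  constructor
  · rintro ⟨hxr, hxq⟩
    rcases P.thin p m r hxr with h | h
    · exact h
    rcases P.thin p m q hxq with h' | h'
    · exact h'
    -- x ∈ [m,r] and x ∈ [m,q], m ∈ [q,r]
    have hA := pretree_between P h2 (by rwa [P.seg_comm] at h')  -- m ∈ [q,r], x ∈ [q,m]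
    -- hA : x ∈ [q,r] ∧ m ∈ [x,r]
    have hxm : x = m := by
      refine P.linear r x m ?_ ?_
      · have h4 := hA.2
        rwa [P.seg_comm] at h4
      · rwa [P.seg_comm] at h
    subst hxm
    exact P.right_mem p x
  · intro hx
    have hA := pretree_between P h1 hx
    have hB := pretree_between P h3 hx
    exact ⟨hB.1, hA.1⟩

/-- If `m` is a pseudocenter of `p, q, r` then `[p,r] ∩ [p,q] = [p,m]` and
`[p,r] ∩ [q,r] = [m,r]`. -/
theorem pretree_pseudocenter_splits {T : Type*} (P : Pretree T) (p q r m : T)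
    (hm : m ∈ P.seg p q ∩ P.seg q r ∩ P.seg p r) :
    P.seg p r ∩ P.seg p q = P.seg p m ∧ P.seg p r ∩ P.seg q r = P.seg m r := by
  obtain ⟨⟨h1, h2⟩, h3⟩ := hm
  refine ⟨pretree_half P p q r m h1 h2 h3, ?_⟩
  have := pretree_half P r q p m (by rwa [P.seg_comm] at h2) (by rwa [P.seg_comm] at h1)
    (by rwa [P.seg_comm] at h3)
  rw [P.seg_comm r p, P.seg_comm r q, P.seg_comm r m] at this
  exact this
end

section
/- The fixed-point set of a rigid pretree-automorphism of a pretree is convex: if f : T → T is a pretree-automorphism such that f fixes no direction at its fixed-point set, then for any p, q fixed by f, every point of [p,q] is fixed by f. -/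
/-- A direction at a subset `S`: a maximal subset `D` such that `[q,r] ∩ S = ∅`
for all `q, r ∈ D`. -/
def Pretree.IsDirectionAt {T : Type*} (P : Pretree T) (S D : Set T) : Prop :=
  (∀ q ∈ D, ∀ r ∈ D, P.seg q r ∩ S = ∅) ∧
    ∀ D' : Set T, (∀ q ∈ D', ∀ r ∈ D', P.seg q r ∩ S = ∅) → D ⊆ D' → D' = D

/-- The degenerate segment `[x,x]` is `{x}`. -/
lemma Pretree.seg_self {T : Type*} (P : Pretree T) (x : T) : P.seg x x = {x} := by
  apply subset_antisymm
  · intro r hr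
    have h := P.linear x x r hr (P.left_mem x r)
    exact h ▸ rfl
  · intro r hr
    rcases hr with rfl
    exact P.left_mem _ _

/-- One-sided convexity: if `a ∈ [p,q]` and `c ∈ [a,q]` then `c ∈ [p,q]`. -/
lemma Pretree.cvx1 {T : Type*} (P : Pretree T) {p q a c : T}
    (ha : a ∈ P.seg p q) (hc : c ∈ P.seg a q) : c ∈ P.seg p q := by
  rcases P.thin p c q ha with h | h
  · -- h : a ∈ seg p c
    rcases P.thin a p q hc with h2 | h2
    · -- h2 : c ∈ seg a p
      have h3 : c ∈ P.seg p a := by rw [P.seg_comm]; exact h2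
      have : c = a := P.linear p c a h h3
      rw [this]; exact ha
    · exact h2
  · -- h : a ∈ seg c q
    have h1 : a ∈ P.seg q c := by rw [P.seg_comm]; exact h
    have h2 : c ∈ P.seg q a := by rw [P.seg_comm]; exact hc
    have : a = c := P.linear q a c h2 h1
    rw [← this]; exact ha

/-- Segments are convex. -/
lemma Pretree.cvx2 {T : Type*} (P : Pretree T) {p q a b c : T}
    (ha : a ∈ P.seg p q) (hb : b ∈ P.seg p q) (hc : c ∈ P.seg a b) : c ∈ P.seg p q := by
  rcases P.thin a q b hc with h | h
  · exact P.cvx1 ha h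
  · have h' : c ∈ P.seg b q := by rw [P.seg_comm]; exact h
    exact P.cvx1 hb h'

/-- Totality of the order based at `p` on a segment `[p,q]`. -/
lemma Pretree.tot {T : Type*} (P : Pretree T) {p q a b : T}
    (ha : a ∈ P.seg p q) (hb : b ∈ P.seg p q) : a ∈ P.seg p b ∨ b ∈ P.seg p a := by
  rcases P.thin p b q ha with h | h
  · exact Or.inl h
  rcases P.thin p a q hb with h' | h'
  · exact Or.inr h'
  -- h : a ∈ seg b q, h' : b ∈ seg a q
  have h1 : a ∈ P.seg q b := by rw [P.seg_comm]; exact h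
  have h2 : b ∈ P.seg q a := by rw [P.seg_comm]; exact h'
  have : a = b := P.linear q a b h2 h1
  rw [this]
  exact Or.inl (P.right_mem p b)

/-- Key order lemma: if `x ≤ g x` (based at a `g`-fixed point `p`) and `s` is a
`g`-fixed point on `[x, g x]` comparable to `x`, then `g x = x`. -/
lemma Pretree.key1 {T : Type*} (P : Pretree T) (g : T → T) (hinj : Function.Injective g)
    (hgseg : ∀ a b, P.seg (g a) (g b) = g '' P.seg a b) {p x s : T}
    (hp : g p = p) (hsfix : g s = s) (hxle : x ∈ P.seg p (g x)) (hs : s ∈ P.seg x (g x))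
    (htot : x ∈ P.seg p s ∨ s ∈ P.seg p x) : g x = x := by
  rcases htot with hxs | hsx
  · have hgx : g x ∈ P.seg p s := by
      have hm : g x ∈ g '' P.seg p s := ⟨x, hxs, rfl⟩
      rw [← hgseg, hp, hsfix] at hm; exact hm
    rcases P.thin p x s hgx with h | h
    · exact P.linear p (g x) x hxle h
    · have hgxs : s = g x := P.linear x s (g x) h hs
      have hgg : g (g x) = g x := by rw [← hgxs, hsfix, hgxs]
      exact hinj hgg
  · rcases P.thin p s (g x) hxle with h | h
    · have hxs : x = s := P.linear p x s hsx h
      rw [hxs]; exact hsfix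
    · have h1 : s ∈ P.seg (g x) x := by rw [P.seg_comm]; exact hs
      have h2 : x ∈ P.seg (g x) s := by rw [P.seg_comm]; exact h
      have hxs : x = s := P.linear (g x) x s h1 h2
      rw [hxs]; exact hsfix

/-- If `x ∈ [p,q]` with `p, q` fixed and some fixed point lies on `[x, f x]`,
then `x` itself is fixed. -/
lemma Pretree.key2 {T : Type*} (P : Pretree T) (f : T → T) (hbij : Function.Bijective f)
    (hseg : ∀ p q, P.seg (f p) (f q) = f '' P.seg p q) {p q x : T}
    (hp : f p = p) (hq : f q = q) (hx : x ∈ P.seg p q) :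
    ∀ s ∈ P.seg x (f x), f s = s → f x = x := by
  intro s hs hsfix
  have hinj := hbij.1
  set e := Equiv.ofBijective f hbij with he
  set g : T → T := ⇑e.symm with hgdef
  have hfg : ∀ a, f (g a) = a := fun a => e.apply_symm_apply a
  have hgf : ∀ a, g (f a) = a := fun a => e.symm_apply_apply a
  have hginj : Function.Injective g := e.symm.injective
  have hgseg : ∀ a b, P.seg (g a) (g b) = g '' P.seg a b := by
    intro a b
    have h1 : f '' P.seg (g a) (g b) = P.seg a b := by
      rw [← hseg, hfg a, hfg b]
    have h2 : f '' (g '' P.seg a b) = P.seg a b := by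
      rw [Set.image_image]
      simp only [hfg, Set.image_id']
    exact Set.image_injective.mpr hinj (h1.trans h2.symm)
  have hgp : g p = p := by conv_lhs => rw [← hp]; rw [hgf]
  have hgs : g s = s := by conv_lhs => rw [← hsfix]; rw [hgf]
  have hfxI : f x ∈ P.seg p q := by
    rw [← hp, ← hq, hseg]; exact ⟨x, hx, rfl⟩
  have hsI : s ∈ P.seg p q := P.cvx2 hx hfxI hs
  have htot := P.tot hx hsI
  rcases P.tot hx hfxI with hcase | hcase
  · exact P.key1 f hinj hseg hp hsfix hcase hs htot
  · -- f x ∈ seg p x ; use g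
    have hxle : x ∈ P.seg p (g x) := by
      have hm : g (f x) ∈ g '' P.seg p x := ⟨f x, hcase, rfl⟩
      rw [← hgseg, hgp, hgf] at hm; exact hm
    have hs' : s ∈ P.seg x (g x) := by
      have hm : g s ∈ g '' P.seg x (f x) := ⟨s, hs, rfl⟩
      rw [← hgseg, hgf, hgs] at hm
      rw [P.seg_comm]; exact hm
    have hgx : g x = x := P.key1 g hginj hgseg hgp hgs hxle hs' htot
    calc f x = f (g x) := by rw [hgx]
      _ = x := hfg x

/-- The fixed-point set of a rigid pretree-automorphism is convex: if `f` is a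
pretree-automorphism fixing no direction (setwise) at its fixed-point set, then
for fixed points `p, q`, every point of `[p,q]` is fixed. -/
theorem pretree_rigid_fix_convex {T : Type*} (P : Pretree T) (f : T → T)
    (hbij : Function.Bijective f)
    (hseg : ∀ p q, P.seg (f p) (f q) = f '' P.seg p q)
    (hrigid : ∀ D : Set T, P.IsDirectionAt {x | f x = x} D → f '' D ≠ D)
    (p q : T) (hp : f p = p) (hq : f q = q) :
    ∀ x ∈ P.seg p q, f x = x := by
  intro x hx
  by_contra hne
  have hinj := hbij.1
  -- no fixed point lies on [x, f x]
  have key : ∀ s ∈ P.seg x (f x), f s ≠ s := fun s hs hsfix =>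
    hne (P.key2 f hbij hseg hp hq hx s hs hsfix)
  set e := Equiv.ofBijective f hbij with he
  set g : T → T := ⇑e.symm with hgdef
  have hfg : ∀ a, f (g a) = a := fun a => e.apply_symm_apply a
  have hgf : ∀ a, g (f a) = a := fun a => e.symm_apply_apply a
  have hgseg : ∀ a b, P.seg (g a) (g b) = g '' P.seg a b := by
    intro a b
    have h1 : f '' P.seg (g a) (g b) = P.seg a b := by
      rw [← hseg, hfg a, hfg b]
    have h2 : f '' (g '' P.seg a b) = P.seg a b := by
      rw [Set.image_image]
      simp only [hfg, Set.image_id']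
    exact Set.image_injective.mpr hinj (h1.trans h2.symm)
  -- the direction at Fix f containing x
  set D : Set T := {z | ∀ a ∈ P.seg z x, f a ≠ a} with hD
  have hxD : x ∈ D := by
    intro a ha
    rw [P.seg_self] at ha
    rcases ha with rfl
    exact hne
  have hdir : P.IsDirectionAt {x | f x = x} D := by
    constructor
    · intro q' hq' r' hr'
      rw [Set.eq_empty_iff_forall_notMem]
      rintro a ⟨haseg, hafix⟩
      rcases P.thin q' x r' haseg with h | h
      · exact hq' a h hafix
      · have h' : a ∈ P.seg r' x := by rw [P.seg_comm]; exact h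
        exact hr' a h' hafix
    · intro D' hD' hsub
      ext z
      constructor
      · intro hz a ha hafix
        have hd := hD' z hz x (hsub hxD)
        rw [Set.eq_empty_iff_forall_notMem] at hd
        exact hd a ⟨ha, hafix⟩
      · exact fun h => hsub h
  apply hrigid D hdir
  ext w
  simp only [Set.mem_image]
  constructor
  · rintro ⟨z, hz, rfl⟩
    intro a ha hafix
    rcases P.thin (f z) (f x) x ha with h | h
    · rw [hseg z x] at h
      obtain ⟨b, hb, rfl⟩ := h
      exact hz b hb (hinj hafix)
    · have h' : a ∈ P.seg x (f x) := by rw [P.seg_comm]; exact h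
      exact key a h' hafix
  · intro hw
    refine ⟨g w, ?_, hfg w⟩
    intro a ha hafix
    rcases P.thin (g w) (g x) x ha with h | h
    · rw [hgseg w x] at h
      obtain ⟨b, hb, rfl⟩ := h
      have hb' : f b = b := by
        have h1 : f (g b) = g b := hafix
        rw [hfg] at h1
        rw [h1]; exact hafix
      exact hw b hb hb'
    · have hsegx : P.seg (g x) x = g '' P.seg x (f x) := by
        rw [← hgseg, hgf]
      rw [hsegx] at h
      obtain ⟨b, hb, rfl⟩ := h
      have hb' : f b = b := by
        have h1 : f (g b) = g b := hafix
        rw [hfg] at h1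
        rw [h1]; exact hafix
      exact key b hb hb'
end
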